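/- arXiv:2503.07606 — 3 statements merged into one kernel-verified Lean document; each statement's English description precedes it below -/
import Mathlib

section
/- Let S be an N×N real symmetric matrix with nonnegative entries and all row sums equal to 1, and let 0 ≤ s ≤ t < 1. Then the matrix U := (1 − sS)·(1 − tS)^{-1} has nonnegative entries, each of its row sums equals (1 − s)/(1 − t), and consequently ‖Uv‖_∞ ≤ ((1 − s)/(1 − t))·‖v‖_∞ for every vector v ∈ ℂ^N. -/
/-!
For `0 ≤ t < 1` the matrix `t • S` has `ℓ^∞` operator norm at most `t < 1`, so `(1 - t S)⁻¹` is the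
Neumann series `∑ tᵏ Sᵏ`, a sum of nonnegative matrices. Writing
`1 - s S = (1 - t S) + (t - s) S` gives `U = 1 + (t - s) S (1 - t S)⁻¹ ≥ 0` entrywise.
Since `S 𝟙 = 𝟙`, also `U 𝟙 = (1 - s)/(1 - t) 𝟙`, and a nonnegative matrix scales the max norm
by at most its largest row sum.
-/

open scoped Matrix

namespace Matrix

variable {n : Type*} [Fintype n]

theorem norm_map_ofReal_mulVec_apply_le {m : Type*} {A : Matrix m n ℝ} (hA : ∀ i j, 0 ≤ A i j)
    (v : n → ℂ) (i : m) :
    ‖((A.map (fun x : ℝ => (x : ℂ))) *ᵥ v) i‖ ≤ (∑ j, A i j) * ⨆ j, ‖v j‖ := by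
  have hv : ∀ j, ‖v j‖ ≤ ⨆ j, ‖v j‖ := le_ciSup (Finite.bddAbove_range _)
  calc ‖((A.map (fun x : ℝ => (x : ℂ))) *ᵥ v) i‖ = ‖∑ j, (A i j : ℂ) * v j‖ := rfl
    _ ≤ ∑ j, ‖(A i j : ℂ) * v j‖ := norm_sum_le _ _
    _ = ∑ j, A i j * ‖v j‖ := by
        simp only [norm_mul, Complex.norm_real, Real.norm_eq_abs, abs_of_nonneg (hA i _)]
    _ ≤ ∑ j, A i j * ⨆ j, ‖v j‖ := by gcongr with j; exacts [hA i j, hv j]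
    _ = (∑ j, A i j) * ⨆ j, ‖v j‖ := Finset.sum_mul _ _ _ |>.symm

variable [DecidableEq n]

theorem nonsing_inv_mulVec_eq_inv_smul {K : Type*} [Field K] {A : Matrix n n K}
    (hA : IsUnit A.det) {v : n → K} {c : K} (hc : c ≠ 0) (h : A *ᵥ v = c • v) :
    A⁻¹ *ᵥ v = c⁻¹ • v :=
  calc A⁻¹ *ᵥ v = c⁻¹ • A⁻¹ *ᵥ (c • v) := by
        rw [mulVec_smul, smul_smul, inv_mul_cancel₀ hc, one_smul]
    _ = c⁻¹ • v := by rw [← h, mulVec_mulVec, nonsing_inv_mul _ hA, one_mulVec]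

noncomputable def evolutionKernel (S : Matrix n n ℝ) (s t : ℝ) : Matrix n n ℝ :=
  (1 - s • S) * (1 - t • S)⁻¹

section LinftyOpNorm

attribute [local instance] Matrix.linftyOpNormedRing Matrix.linftyOpNormedAlgebra

theorem hasSum_pow_nonsing_inv_one_sub {A : Matrix n n ℝ} (h : ‖A‖ < 1) :
    HasSum (fun k : ℕ => A ^ k) (1 - A)⁻¹ := by
  rw [nonsing_inv_eq_ringInverse]
  exact hasSum_geom_series_inverse A h

variable {S : Matrix n n ℝ} {t : ℝ}

theorem linfty_opNorm_le_one_of_mem_rowStochastic (hS : S ∈ rowStochastic ℝ n) : ‖S‖ ≤ 1 := by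
  rw [linfty_opNorm_def, ← NNReal.coe_one, NNReal.coe_le_coe]
  refine Finset.sup_le fun i _ => ?_
  rw [← NNReal.coe_le_coe, NNReal.coe_sum, NNReal.coe_one]
  simp only [coe_nnnorm, Real.norm_eq_abs, abs_of_nonneg (nonneg_of_mem_rowStochastic hS),
    sum_row_of_mem_rowStochastic hS i, le_refl]

theorem linfty_opNorm_smul_lt_one_of_mem_rowStochastic (hS : S ∈ rowStochastic ℝ n)
    (ht0 : 0 ≤ t) (ht1 : t < 1) : ‖t • S‖ < 1 := by
  rw [norm_smul, Real.norm_eq_abs, abs_of_nonneg ht0]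
  calc t * ‖S‖ ≤ t * 1 := by gcongr; exact linfty_opNorm_le_one_of_mem_rowStochastic hS
    _ < 1 := by linarith

theorem isUnit_det_one_sub_smul_of_mem_rowStochastic (hS : S ∈ rowStochastic ℝ n)
    (ht0 : 0 ≤ t) (ht1 : t < 1) : IsUnit (1 - t • S).det :=
  (isUnit_iff_isUnit_det _).mp <|
    isUnit_one_sub_of_norm_lt_one (linfty_opNorm_smul_lt_one_of_mem_rowStochastic hS ht0 ht1)

theorem nonsing_inv_one_sub_smul_nonneg_of_mem_rowStochastic (hS : S ∈ rowStochastic ℝ n)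
    (ht0 : 0 ≤ t) (ht1 : t < 1) (i j : n) : 0 ≤ (1 - t • S)⁻¹ i j := by
  have hsum := hasSum_pow_nonsing_inv_one_sub
    (linfty_opNorm_smul_lt_one_of_mem_rowStochastic hS ht0 ht1)
  refine HasSum.nonneg (fun k => ?_) ((hsum.map (entryLinearMap ℝ ℝ i j) ?_))
  · simp only [Function.comp_apply, entryLinearMap_apply, smul_pow, smul_apply, smul_eq_mul]
    exact mul_nonneg (pow_nonneg ht0 k) (nonneg_of_mem_rowStochastic (pow_mem hS k))
  · exact (entryLinearMap ℝ ℝ i j).continuous_of_finiteDimensional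

end LinftyOpNorm

variable {S : Matrix n n ℝ} {s t : ℝ}

theorem one_sub_smul_mulVec_one (hS : S ∈ rowStochastic ℝ n) (t : ℝ) :
    (1 - t • S) *ᵥ 1 = (1 - t) • 1 := by
  rw [sub_mulVec, smul_mulVec, one_mulVec, one_vecMul_of_mem_rowStochastic hS, sub_smul, one_smul]

theorem evolutionKernel_eq (hdet : IsUnit (1 - t • S).det) :
    evolutionKernel S s t = 1 + (t - s) • (S * (1 - t • S)⁻¹) := by
  have hsplit : 1 - s • S = (1 - t • S) + (t - s) • S := by rw [sub_smul]; abel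
  rw [evolutionKernel, hsplit, add_mul, mul_nonsing_inv _ hdet, smul_mul]

theorem evolutionKernel_nonneg (hS : S ∈ rowStochastic ℝ n) (hs0 : 0 ≤ s) (hst : s ≤ t)
    (ht1 : t < 1) (i j : n) : 0 ≤ evolutionKernel S s t i j := by
  have ht0 : 0 ≤ t := hs0.trans hst
  have hSR : 0 ≤ (S * (1 - t • S)⁻¹) i j := Finset.sum_nonneg fun k _ =>
    mul_nonneg (nonneg_of_mem_rowStochastic hS)
      (nonsing_inv_one_sub_smul_nonneg_of_mem_rowStochastic hS ht0 ht1 k j)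
  rw [evolutionKernel_eq (isUnit_det_one_sub_smul_of_mem_rowStochastic hS ht0 ht1)]
  simp only [add_apply, smul_apply, smul_eq_mul, one_apply]
  exact add_nonneg (by split_ifs <;> norm_num) (mul_nonneg (sub_nonneg.2 hst) hSR)

theorem evolutionKernel_mulVec_one (hS : S ∈ rowStochastic ℝ n) (ht0 : 0 ≤ t) (ht1 : t < 1) :
    evolutionKernel S s t *ᵥ 1 = ((1 - s) / (1 - t)) • 1 := by
  rw [evolutionKernel, ← mulVec_mulVec,
    nonsing_inv_mulVec_eq_inv_smul (isUnit_det_one_sub_smul_of_mem_rowStochastic hS ht0 ht1)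
      (sub_ne_zero.2 ht1.ne') (one_sub_smul_mulVec_one hS t),
    mulVec_smul, one_sub_smul_mulVec_one hS s, smul_smul, div_eq_inv_mul]

theorem sum_evolutionKernel_apply (hS : S ∈ rowStochastic ℝ n) (ht0 : 0 ≤ t) (ht1 : t < 1)
    (i : n) : ∑ j, evolutionKernel S s t i j = (1 - s) / (1 - t) := by
  simpa [mulVec, dotProduct] using congrFun (evolutionKernel_mulVec_one (s := s) hS ht0 ht1) i

end Matrix

theorem evolution_kernel_maxNorm_general {N : ℕ} (S : Matrix (Fin N) (Fin N) ℝ)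
    (hnn : ∀ i j, 0 ≤ S i j) (hrow : ∀ i, ∑ j, S i j = 1)
    (s t : ℝ) (hs0 : 0 ≤ s) (hst : s ≤ t) (ht1 : t < 1) :
    let U : Matrix (Fin N) (Fin N) ℝ := (1 - s • S) * (1 - t • S)⁻¹
    (∀ i j, 0 ≤ U i j) ∧
    (∀ i, ∑ j, U i j = (1 - s) / (1 - t)) ∧
    (∀ v : Fin N → ℂ, ∀ i,
      ‖(U.map (fun x : ℝ => (x : ℂ))).mulVec v i‖ ≤ (1 - s) / (1 - t) * ⨆ j, ‖v j‖) := by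
  intro U
  have hS : S ∈ Matrix.rowStochastic ℝ (Fin N) :=
    Matrix.mem_rowStochastic_iff_sum.2 ⟨hnn, hrow⟩
  have hU : U = Matrix.evolutionKernel S s t := rfl
  have hUnn := Matrix.evolutionKernel_nonneg hS hs0 hst ht1
  have hUrow := Matrix.sum_evolutionKernel_apply (s := s) hS (hs0.trans hst) ht1
  refine ⟨hU ▸ hUnn, hU ▸ hUrow, fun v i => ?_⟩
  simpa only [hU, hUrow] using Matrix.norm_map_ofReal_mulVec_apply_le hUnn v i

/-- **Positivity and max-norm contraction for the evolution kernel.**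
Let `S` be an `N × N` real symmetric matrix with nonnegative entries and row sums `1`, and let
`0 ≤ s ≤ t < 1`. Then `U := (1 - s S)(1 - t S)⁻¹` has nonnegative entries, each row sum of `U`
equals `(1 - s)/(1 - t)`, and `‖U v‖_∞ ≤ ((1 - s)/(1 - t)) ‖v‖_∞` for every `v : ℂ^N`. -/
theorem evolution_kernel_maxNorm {N : ℕ} (S : Matrix (Fin N) (Fin N) ℝ)
    (hsym : S.IsSymm) (hnn : ∀ i j, 0 ≤ S i j) (hrow : ∀ i, ∑ j, S i j = 1)
    (s t : ℝ) (hs0 : 0 ≤ s) (hst : s ≤ t) (ht1 : t < 1) :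
    let U : Matrix (Fin N) (Fin N) ℝ := (1 - s • S) * (1 - t • S)⁻¹
    (∀ i j, 0 ≤ U i j) ∧
    (∀ i, ∑ j, U i j = (1 - s) / (1 - t)) ∧
    (∀ v : Fin N → ℂ, ∀ i,
      ‖(U.map (fun x : ℝ => (x : ℂ))).mulVec v i‖ ≤ (1 - s) / (1 - t) * ⨆ j, ‖v j‖) :=
  evolution_kernel_maxNorm_general S hnn hrow s t hs0 hst ht1
end

section
/- There exists a universal constant C > 0 such that for every a ≥ 0, ∫_0^a exp(√a − √x − √(a−x)) dx ≤ C. -/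
/-!
For `0 ≤ x ≤ y` one has `√(x + y) ≤ √y + √x / 2`, so the exponent `√(x + y) - √x - √y` is at
most `-min (√x) (√y) / 2`. The integrand is therefore bounded by
`exp (-√x / 2) + exp (-√(a - x) / 2)`, and each summand integrates over `[0, a]` to at most the
Gamma integral `∫₀^∞ exp (-√x / 2) dx = 8`, whatever `a` is.
-/

open Real Set MeasureTheory

lemma sqrt_add_le_sqrt_add_half_sqrt {x y : ℝ} (hx : 0 ≤ x) (hxy : x ≤ y) :
    √(x + y) ≤ √y + √x / 2 := by
  have hxx : √x * √x = x := mul_self_sqrt hx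
  have hyy : √y * √y = y := mul_self_sqrt (hx.trans hxy)
  have hxy' : √x ≤ √y := sqrt_le_sqrt hxy
  rw [sqrt_le_iff]
  constructor
  · positivity
  · nlinarith [mul_le_mul_of_nonneg_left hxy' (sqrt_nonneg x)]

lemma exp_sqrt_add_sub_sqrt_sub_sqrt_le {x y : ℝ} (hx : 0 ≤ x) (hy : 0 ≤ y) :
    exp (√(x + y) - √x - √y) ≤ exp (-(1 / 2 * √x)) + exp (-(1 / 2 * √y)) := by
  wlog hxy : x ≤ y generalizing x y
  · rw [add_comm x y, sub_right_comm, add_comm (exp _)]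
    exact this hy hx (le_of_not_ge hxy)
  calc exp (√(x + y) - √x - √y) ≤ exp (-(1 / 2 * √x)) := by
        gcongr
        linarith [sqrt_add_le_sqrt_add_half_sqrt hx hxy]
    _ ≤ _ := le_add_of_nonneg_right (exp_pos _).le

lemma integrableOn_exp_neg_mul_sqrt {b : ℝ} (hb : 0 < b) :
    IntegrableOn (fun x ↦ exp (-(b * √x))) (Ioi 0) := by
  refine (integrableOn_rpow_mul_exp_neg_mul_rpow (s := 0) (p := 1 / 2) (by norm_num) (by norm_num)
    hb).congr_fun (fun x _ ↦ ?_) measurableSet_Ioi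
  simp [sqrt_eq_rpow]

lemma integral_exp_neg_mul_sqrt {b : ℝ} (hb : 0 < b) :
    ∫ x in Ioi 0, exp (-(b * √x)) = 2 / b ^ 2 := by
  have := integral_exp_neg_mul_rpow (p := 1 / 2) (by norm_num) hb
  simp only [← sqrt_eq_rpow, neg_mul] at this
  rw [this]
  norm_num [div_eq_inv_mul]

lemma intervalIntegral_le_integral_Ioi {f : ℝ → ℝ} {a b : ℝ} (hab : a ≤ b)
    (hf : IntegrableOn f (Ioi a)) (hf0 : ∀ x ∈ Ioi a, 0 ≤ f x) :
    ∫ x in a..b, f x ≤ ∫ x in Ioi a, f x := by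
  rw [intervalIntegral.integral_of_le hab]
  exact setIntegral_mono_set hf ((ae_restrict_iff' measurableSet_Ioi).2 (.of_forall hf0))
    (.of_forall Ioc_subset_Ioi_self)

open intervalIntegral

/-- There is a universal constant `C > 0` such that for every `a ≥ 0`,
`∫_0^a exp(√a − √x − √(a−x)) dx ≤ C`. -/
theorem integral_exp_sqrt_convolution_bound :
    ∃ C : ℝ, 0 < C ∧ ∀ a : ℝ, 0 ≤ a →
      (∫ x in (0 : ℝ)..a,
        Real.exp (Real.sqrt a - Real.sqrt x - Real.sqrt (a - x))) ≤ C := by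
  refine ⟨16, by norm_num, fun a ha ↦ ?_⟩
  set f : ℝ → ℝ := fun x ↦ exp (-(1 / 2 * √x)) with hf_def
  have hf : Continuous f := by fun_prop
  have hf_reflect : Continuous fun x ↦ f (a - x) := hf.comp (continuous_sub_left a)
  have hf_bound : (∫ x in 0..a, f x) ≤ 8 := by
    calc (∫ x in 0..a, f x) ≤ ∫ x in Ioi 0, f x :=
          intervalIntegral_le_integral_Ioi ha (integrableOn_exp_neg_mul_sqrt one_half_pos)
            fun x _ ↦ (exp_pos _).le
      _ = 8 := by rw [hf_def, integral_exp_neg_mul_sqrt one_half_pos]; norm_num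
  calc (∫ x in 0..a, exp (√a - √x - √(a - x)))
      ≤ ∫ x in 0..a, (f x + f (a - x)) := by
        refine integral_mono_on ha ((by fun_prop : Continuous _).intervalIntegrable _ _)
          ((hf.add hf_reflect).intervalIntegrable _ _) fun x hx ↦ ?_
        have := exp_sqrt_add_sub_sqrt_sub_sqrt_le hx.1 (sub_nonneg.2 hx.2)
        rwa [add_sub_cancel] at this
    _ = (∫ x in 0..a, f x) + ∫ x in 0..a, f x := by
        rw [integral_add (hf.intervalIntegrable _ _) (hf_reflect.intervalIntegrable _ _),
          integral_comp_sub_left f a, sub_self, sub_zero]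
    _ ≤ 16 := by linarith
end

section
/- For z ∈ ℂ with Im z > 0, define m(z) := ∫_{−2}^{2} (1/(2π))·√(4 − x²)/(x − z) dx. Then m(z) satisfies the quadratic equation m(z)² + z·m(z) + 1 = 0. -/
/-!
With `z = q + q⁻¹`, `‖q‖ > 1`, the substitution `x = 2 cos θ`, `u = e^{iθ}` turns the integrand
into `φ(u) + φ(u⁻¹)` with `φ(u) = (1 - u²)/(u - q)`, which is holomorphic on the closed unit disc.
Folding `θ ↦ -θ` makes `m` the circle average of `φ`, which is `φ(0) = -q⁻¹` by the mean value
property; and `-q⁻¹` is a root of `m² + (q + q⁻¹) m + 1`.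
-/

open Complex Metric Real intervalIntegral

theorem im_add_inv_eq_zero_of_norm_eq_one {q : ℂ} (hq : ‖q‖ = 1) : (q + q⁻¹).im = 0 := by
  rw [inv_def, normSq_eq_norm_sq, hq]
  simp

theorem exists_one_lt_norm_eq_add_inv {z : ℂ} (hz : z.im ≠ 0) :
    ∃ q : ℂ, 1 < ‖q‖ ∧ z = q + q⁻¹ := by
  obtain ⟨s, hs⟩ := IsAlgClosed.exists_eq_mul_self (z ^ 2 - 4)
  set p := (z + s) / 2
  have hp : p * (z - p) = 1 := by simp only [p]; linear_combination (1 / 4 : ℂ) * hs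
  have hp₀ : p ≠ 0 := left_ne_zero_of_mul_eq_one hp
  have hz_eq : z = p + p⁻¹ := by rw [← eq_inv_of_mul_eq_one_right hp]; ring
  rcases lt_trichotomy ‖p‖ 1 with hlt | heq | hgt
  · refine ⟨p⁻¹, ?_, by rw [inv_inv, add_comm, hz_eq]⟩
    rw [norm_inv]
    exact one_lt_inv_iff₀.2 ⟨norm_pos_iff.2 hp₀, hlt⟩
  · exact absurd (hz_eq ▸ im_add_inv_eq_zero_of_norm_eq_one heq) hz
  · exact ⟨p, hgt, hz_eq⟩

section

variable {E : Type*} [NormedAddCommGroup E] [NormedSpace ℝ E]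

theorem integral_eq_integral_mul_sin_smul_comp_mul_cos (g : ℝ → E) {r : ℝ} (hr : 0 ≤ r) :
    ∫ x in -r..r, g x = ∫ θ in 0..π, (r * Real.sin θ) • g (r * Real.cos θ) := by
  have h := integral_deriv_smul_comp_of_deriv_nonpos (a := π) (b := 0) (g := g)
    (f := fun θ => r * Real.cos θ) (f' := fun θ => -(r * Real.sin θ))
    (by fun_prop) (fun θ _ => by simpa using (Real.hasDerivAt_cos θ).const_mul r)
    (fun θ hθ => by
      rw [min_eq_right pi_pos.le, max_eq_left pi_pos.le] at hθ
      have := Real.sin_nonneg_of_nonneg_of_le_pi hθ.1.le hθ.2.le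
      nlinarith)
  simp only [Real.cos_pi, Real.cos_zero, mul_neg, mul_one, neg_smul, Function.comp_apply,
    integral_neg] at h
  rw [← h, integral_symm, neg_neg]

theorem integral_add_comp_neg {g : ℝ → E} (hg : Continuous g) (a : ℝ) :
    ∫ θ in 0..a, (g θ + g (-θ)) = ∫ θ in -a..a, g θ := by
  have hg' : Continuous fun θ => g (-θ) := hg.comp continuous_neg
  rw [integral_add (hg.intervalIntegrable _ _) (hg'.intervalIntegrable _ _),
    intervalIntegral.integral_comp_neg g, neg_zero, add_comm,
    integral_add_adjacent_intervals (hg.intervalIntegrable _ _) (hg.intervalIntegrable _ _)]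

theorem integral_neg_pi_pi_comp_circleMap (f : ℂ → E) (c : ℂ) (R : ℝ) :
    ∫ θ in -π..π, f (circleMap c R θ) = (2 * π) • circleAverage f c R := by
  rw [circleAverage_eq_integral_add (-π), smul_inv_smul₀ (by positivity),
    integral_comp_add_right (fun θ => f (circleMap c R θ))]
  ring_nf

end

theorem sqrt_four_sub_two_mul_cos_sq {θ : ℝ} (h₀ : 0 ≤ θ) (hπ : θ ≤ π) :
    √(4 - (2 * Real.cos θ) ^ 2) = 2 * Real.sin θ := by
  rw [show 4 - (2 * Real.cos θ) ^ 2 = (2 * Real.sin θ) ^ 2 by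
    linear_combination (-4) * Real.sin_sq_add_cos_sq θ]
  exact Real.sqrt_sq (by linarith [Real.sin_nonneg_of_nonneg_of_le_pi h₀ hπ])

theorem circleMap_zero_one_eq (θ : ℝ) : circleMap 0 1 θ = Real.cos θ + Real.sin θ * I := by
  simp [circleMap_zero, Complex.exp_mul_I]

theorem neg_sq_sub_inv_div_add_inv_sub_add_inv {u q : ℂ} (hu : u ≠ 0) (hq : q ≠ 0)
    (huq : u ≠ q) (huq' : u⁻¹ ≠ q) :
    -(u - u⁻¹) ^ 2 / (u + u⁻¹ - (q + q⁻¹))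
      = (1 - u ^ 2) / (u - q) + (1 - u⁻¹ ^ 2) / (u⁻¹ - q) := by
  have h₁ : u - q ≠ 0 := sub_ne_zero.2 huq
  have h₂ : 1 - u * q ≠ 0 := fun h =>
    huq' (eq_inv_of_mul_eq_one_right (sub_eq_zero.1 h).symm).symm
  have h₃ : u⁻¹ - q = (1 - u * q) / u := by field_simp
  have h₄ : u + u⁻¹ - (q + q⁻¹) = (u - q) * (1 - u * q) / (-(u * q)) := by field_simp; ring
  rw [h₃, h₄]
  field_simp
  ring

theorem two_sin_sq_div_two_cos_sub_add_inv {q : ℂ} (hq₀ : q ≠ 0) (hq : ‖q‖ ≠ 1) (θ : ℝ) :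
    ((2 * Real.sin θ : ℝ) : ℂ) ^ 2 / ((2 * Real.cos θ : ℝ) - (q + q⁻¹))
      = (1 - circleMap 0 1 θ ^ 2) / (circleMap 0 1 θ - q)
        + (1 - circleMap 0 1 (-θ) ^ 2) / (circleMap 0 1 (-θ) - q) := by
  set u := circleMap 0 1 θ with hu
  have hnorm : ‖u‖ = 1 := by simp [hu]
  have hinv : circleMap 0 1 (-θ) = u⁻¹ := by simp [hu, circleMap_zero_inv]
  have hu_eq : u = Real.cos θ + Real.sin θ * I := circleMap_zero_one_eq θ
  have hinv_eq : u⁻¹ = Real.cos θ - Real.sin θ * I := by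
    rw [← hinv, circleMap_zero_one_eq, Real.cos_neg, Real.sin_neg]; push_cast; ring
  have hcos : ((2 * Real.cos θ : ℝ) : ℂ) = u + u⁻¹ := by
    rw [hinv_eq, hu_eq]; push_cast; ring
  have hsin : ((2 * Real.sin θ : ℝ) : ℂ) ^ 2 = -(u - u⁻¹) ^ 2 := by
    rw [hinv_eq, hu_eq]; push_cast; ring_nf; rw [I_sq]; ring
  rw [hinv, hcos, hsin]
  refine neg_sq_sub_inv_div_add_inv_sub_add_inv ?_ hq₀ ?_ ?_
  · exact norm_ne_zero_iff.1 (by simp [hnorm])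
  · rintro rfl; exact hq hnorm
  · rintro rfl; exact hq (by rw [norm_inv, hnorm, inv_one])

theorem circleAverage_one_sub_sq_div_sub {q : ℂ} (hq : 1 < ‖q‖) :
    circleAverage (fun u => (1 - u ^ 2) / (u - q)) 0 1 = -q⁻¹ := by
  have hdiff : DifferentiableOn ℂ (fun u : ℂ => (1 - u ^ 2) / (u - q)) (closedBall 0 1) :=
    DifferentiableOn.div (by fun_prop) (by fun_prop) fun u hu =>
      sub_ne_zero.2 (by rintro rfl; simp at hu; linarith)
  rw [(hdiff.diffContOnCl_ball (by simp)).circleAverage]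
  simp

/-- **Self-consistent equation for the semicircle Stieltjes transform.**
For `z : ℂ` with `Im z > 0`, the Stieltjes transform
`m(z) = ∫_{−2}^{2} (2π)⁻¹ √(4 − x²)/(x − z) dx` of the semicircle law satisfies
`m(z)² + z m(z) + 1 = 0`. -/
theorem semicircle_stieltjes_quadratic (z : ℂ) (hz : 0 < z.im) :
    let m : ℂ := ∫ x in (-2 : ℝ)..2,
      ((1 / (2 * Real.pi) * Real.sqrt (4 - x ^ 2) : ℝ) : ℂ) / ((x : ℂ) - z)
    m ^ 2 + z * m + 1 = 0 := by
  intro m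
  obtain ⟨q, hq, rfl⟩ := exists_one_lt_norm_eq_add_inv hz.ne'
  have hq₀ : q ≠ 0 := norm_pos_iff.1 (one_pos.trans hq)
  set φ : ℂ → ℂ := fun u => (1 - u ^ 2) / (u - q)
  have hφ : Continuous fun θ => φ (circleMap 0 1 θ) :=
    Continuous.div (by fun_prop) (by fun_prop) fun θ h =>
      hq.ne' (by rw [← sub_eq_zero.1 h, norm_circleMap_zero, abs_one])
  have hm : m = -q⁻¹ := calc
    m = ∫ θ in 0..π, (2 * Real.sin θ) • (((1 / (2 * π) * √(4 - (2 * Real.cos θ) ^ 2) : ℝ) : ℂ)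
        / (((2 * Real.cos θ : ℝ) : ℂ) - (q + q⁻¹))) :=
      integral_eq_integral_mul_sin_smul_comp_mul_cos _ zero_le_two
    _ = ∫ θ in 0..π, (2 * π)⁻¹ • (φ (circleMap 0 1 θ) + φ (circleMap 0 1 (-θ))) := by
      refine integral_congr fun θ hθ => ?_
      rw [Set.uIcc_of_le pi_pos.le] at hθ
      rw [sqrt_four_sub_two_mul_cos_sq hθ.1 hθ.2, ← two_sin_sq_div_two_cos_sub_add_inv hq₀ hq.ne' θ]
      simp only [real_smul]
      push_cast
      ring
    _ = circleAverage φ 0 1 := by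
      rw [integral_smul, integral_add_comp_neg hφ, integral_neg_pi_pi_comp_circleMap,
        inv_smul_smul₀ (by positivity)]
    _ = -q⁻¹ := circleAverage_one_sub_sq_div_sub hq
  rw [hm]
  field_simp
  ring
end
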